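/- arXiv:2112.12120 — 5 statements merged into one kernel-verified Lean document; each statement's English description precedes it below -/
import Mathlib

section
/- Let τ > 0, let A : [0,τ) → ℝ^{n×n} be continuous, and suppose ∫₀ᵗ μ(A(s)) ds → −∞ as t → τ⁻. Then every differentiable x : [0,τ) → ℝⁿ with x'(t) = A(t)x(t) satisfies ‖x(t)‖ → 0 as t → τ⁻. -/
open Matrix Filter Topology

/-- Eigenvalues of a real matrix that is Hermitian (= symmetric); junk value `0` otherwise. -/
noncomputable def eigs {n : ℕ} (M : Matrix (Fin n) (Fin n) ℝ) : Fin n → ℝ :=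
  if h : M.IsHermitian then h.eigenvalues else 0

/-- Largest eigenvalue of a real symmetric matrix. -/
noncomputable def lamMax {n : ℕ} (M : Matrix (Fin n) (Fin n) ℝ) : ℝ := ⨆ i, eigs M i

/-- Smallest eigenvalue of a real symmetric matrix. -/
noncomputable def lamMin {n : ℕ} (M : Matrix (Fin n) (Fin n) ℝ) : ℝ := ⨅ i, eigs M i

/-- Logarithmic norm w.r.t. the Euclidean norm: `μ(M) = λ_max((M + Mᵀ)/2)`. -/
noncomputable def logNorm {n : ℕ} (M : Matrix (Fin n) (Fin n) ℝ) : ℝ :=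
  lamMax ((1 / 2 : ℝ) • (M + Mᵀ))

/-- A matrix acting on Euclidean space. -/
noncomputable def mulVecE {n : ℕ} (M : Matrix (Fin n) (Fin n) ℝ)
    (v : EuclideanSpace ℝ (Fin n)) : EuclideanSpace ℝ (Fin n) :=
  Matrix.toEuclideanCLM (𝕜 := ℝ) M v

/-- Operator norm of a matrix induced by the Euclidean vector norm. -/
noncomputable def opNorm {n : ℕ} (M : Matrix (Fin n) (Fin n) ℝ) : ℝ :=
  ‖Matrix.toEuclideanCLM (𝕜 := ℝ) M‖

/-! Along a solution, `d/dt ‖x‖² = 2⟪x, A x⟫ ≤ 2 μ(A) ‖x‖²`, because `⟪v, M v⟫` only sees the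
symmetric part of `M`, whose Rayleigh quotient is bounded by its largest eigenvalue. Hence
`‖x t‖² exp (-2 ∫₀ᵗ μ(A))` is nonincreasing, i.e. `‖x t‖ ≤ ‖x 0‖ exp (∫₀ᵗ μ(A))`, and the right
side tends to `0`. The fundamental theorem of calculus for `∫₀ᵗ μ(A)` needs `μ` to be continuous,
which holds since `|μ M - μ N| ≤ ‖M - N‖`. -/

open Set Real
open scoped RealInnerProductSpace

section Rayleigh

variable {n : ℕ} {M : Matrix (Fin n) (Fin n) ℝ}

lemma eigs_of_isHermitian (hM : M.IsHermitian) : eigs M = hM.eigenvalues := dif_pos hM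

lemma eigenvalues_le_lamMax (hM : M.IsHermitian) (i : Fin n) : hM.eigenvalues i ≤ lamMax M :=
  eigs_of_isHermitian hM ▸ le_ciSup (Finite.bddAbove_range _) i

lemma mulVecE_eigenvectorBasis (hM : M.IsHermitian) (i : Fin n) :
    mulVecE M (hM.eigenvectorBasis i) = hM.eigenvalues i • hM.eigenvectorBasis i := by
  ext j
  exact congrFun (hM.mulVec_eigenvectorBasis i) j

lemma inner_mulVecE_le_lamMax_mul_norm_sq (hM : M.IsHermitian) (v : EuclideanSpace ℝ (Fin n)) :
    ⟪v, mulVecE M v⟫ ≤ lamMax M * ‖v‖ ^ 2 := by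
  set b := hM.eigenvectorBasis
  have hsymm : (Matrix.toEuclideanLin M).IsSymmetric := Matrix.isSymmetric_toEuclideanLin_iff.2 hM
  have hcoord : ∀ i, ⟪v, b i⟫ * ⟪b i, mulVecE M v⟫ = hM.eigenvalues i * ⟪v, b i⟫ ^ 2 := by
    intro i
    rw [show ⟪b i, mulVecE M v⟫ = ⟪mulVecE M (b i), v⟫ from (hsymm (b i) v).symm,
      mulVecE_eigenvectorBasis, real_inner_smul_left, real_inner_comm v]
    ring
  calc ⟪v, mulVecE M v⟫ = ∑ i, hM.eigenvalues i * ⟪v, b i⟫ ^ 2 := by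
        rw [← b.sum_inner_mul_inner]; exact Finset.sum_congr rfl fun i _ => hcoord i
    _ ≤ ∑ i, lamMax M * ⟪v, b i⟫ ^ 2 := by
        gcongr with i; exact eigenvalues_le_lamMax hM i
    _ = lamMax M * ‖v‖ ^ 2 := by
        rw [← Finset.mul_sum, ← real_inner_self_eq_norm_sq, ← b.sum_inner_mul_inner]
        simp_rw [real_inner_comm v, sq]

lemma exists_norm_eq_one_inner_mulVecE_eq_lamMax [Nonempty (Fin n)] (hM : M.IsHermitian) :
    ∃ v : EuclideanSpace ℝ (Fin n), ‖v‖ = 1 ∧ ⟪v, mulVecE M v⟫ = lamMax M := by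
  obtain ⟨i, hi⟩ := Finite.exists_max hM.eigenvalues
  have hmax : lamMax M = hM.eigenvalues i :=
    le_antisymm (ciSup_le fun j => eigs_of_isHermitian hM ▸ hi j) (eigenvalues_le_lamMax hM i)
  refine ⟨hM.eigenvectorBasis i, hM.eigenvectorBasis.orthonormal.1 i, ?_⟩
  rw [mulVecE_eigenvectorBasis, real_inner_smul_right, real_inner_self_eq_norm_sq,
    hM.eigenvectorBasis.orthonormal.1 i, hmax]
  ring

end Rayleigh

section LogNorm

variable {n : ℕ}

lemma isHermitian_symmPart (M : Matrix (Fin n) (Fin n) ℝ) :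
    ((1 / 2 : ℝ) • (M + Mᵀ)).IsHermitian := by
  simp [Matrix.IsHermitian, Matrix.conjTranspose_eq_transpose_of_trivial, add_comm]

lemma inner_mulVecE_symmPart (M : Matrix (Fin n) (Fin n) ℝ) (v : EuclideanSpace ℝ (Fin n)) :
    ⟪v, mulVecE ((1 / 2 : ℝ) • (M + Mᵀ)) v⟫ = ⟪v, mulVecE M v⟫ := by
  have htranspose : ⇑v ⬝ᵥ Mᵀ *ᵥ ⇑v = ⇑v ⬝ᵥ M *ᵥ ⇑v := by
    rw [Matrix.mulVec_transpose, Matrix.dotProduct_mulVec, dotProduct_comm]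
  simp only [mulVecE, Matrix.inner_toEuclideanCLM, Matrix.smul_mulVec, Matrix.add_mulVec,
    dotProduct_smul, dotProduct_add, htranspose, smul_eq_mul]
  ring

lemma inner_mulVecE_le_logNorm_mul_norm_sq (M : Matrix (Fin n) (Fin n) ℝ)
    (v : EuclideanSpace ℝ (Fin n)) : ⟪v, mulVecE M v⟫ ≤ logNorm M * ‖v‖ ^ 2 :=
  inner_mulVecE_symmPart M v ▸ inner_mulVecE_le_lamMax_mul_norm_sq (isHermitian_symmPart M) v

lemma exists_norm_eq_one_inner_mulVecE_eq_logNorm [Nonempty (Fin n)]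
    (M : Matrix (Fin n) (Fin n) ℝ) :
    ∃ v : EuclideanSpace ℝ (Fin n), ‖v‖ = 1 ∧ ⟪v, mulVecE M v⟫ = logNorm M := by
  obtain ⟨v, hv, hmax⟩ := exists_norm_eq_one_inner_mulVecE_eq_lamMax (isHermitian_symmPart M)
  exact ⟨v, hv, inner_mulVecE_symmPart M v ▸ hmax⟩

lemma logNorm_le_logNorm_add_opNorm_sub (M N : Matrix (Fin n) (Fin n) ℝ) :
    logNorm M ≤ logNorm N + opNorm (M - N) := by
  cases isEmpty_or_nonempty (Fin n)
  · simp only [logNorm, lamMax, Real.iSup_of_isEmpty, zero_add]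
    exact norm_nonneg _
  obtain ⟨v, hv, hmax⟩ := exists_norm_eq_one_inner_mulVecE_eq_logNorm M
  have hsplit : mulVecE M v = mulVecE N v + mulVecE (M - N) v := by
    simp [mulVecE]
  calc logNorm M = ⟪v, mulVecE N v⟫ + ⟪v, mulVecE (M - N) v⟫ := by
        rw [← hmax, hsplit, inner_add_right]
    _ ≤ logNorm N * ‖v‖ ^ 2 + ‖v‖ * (opNorm (M - N) * ‖v‖) := by
        gcongr
        · exact inner_mulVecE_le_logNorm_mul_norm_sq N v
        · exact (real_inner_le_norm _ _).trans
            (mul_le_mul_of_nonneg_left (ContinuousLinearMap.le_opNorm _ _) (norm_nonneg _))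
    _ = logNorm N + opNorm (M - N) := by rw [hv]; ring

lemma continuous_opNorm : Continuous (opNorm : Matrix (Fin n) (Fin n) ℝ → ℝ) :=
  continuous_norm.comp (LinearMap.continuous_of_finiteDimensional
    (Matrix.toEuclideanCLM (n := Fin n) (𝕜 := ℝ)).toAlgEquiv.toLinearMap)

lemma opNorm_sub_comm (M N : Matrix (Fin n) (Fin n) ℝ) : opNorm (M - N) = opNorm (N - M) := by
  simp only [opNorm, map_sub, norm_sub_rev]

lemma continuous_logNorm : Continuous (logNorm : Matrix (Fin n) (Fin n) ℝ → ℝ) := by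
  refine continuous_iff_continuousAt.2 fun M => tendsto_iff_norm_sub_tendsto_zero.2 ?_
  have hopNorm : Tendsto (fun N => opNorm (N - M)) (𝓝 M) (𝓝 (opNorm (M - M))) :=
    (continuous_opNorm.comp (continuous_sub_right M)).tendsto M
  rw [sub_self, opNorm, map_zero, norm_zero] at hopNorm
  refine squeeze_zero (fun _ => norm_nonneg _) (fun N => ?_) hopNorm
  rw [Real.norm_eq_abs, abs_sub_le_iff]
  nth_rewrite 2 [opNorm_sub_comm]
  exact ⟨by linarith [logNorm_le_logNorm_add_opNorm_sub N M],
    by linarith [logNorm_le_logNorm_add_opNorm_sub M N]⟩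

end LogNorm

section Gronwall

variable {E : Type*} [NormedAddCommGroup E] [InnerProductSpace ℝ E]
  {x x' : ℝ → E} {g : ℝ → ℝ} {a b : ℝ}

lemma antitoneOn_norm_sq_mul_exp_neg_integral (hg : ContinuousOn g (Icc a b))
    (hxc : ContinuousOn x (Icc a b)) (hx : ∀ t ∈ Ioo a b, HasDerivAt x (x' t) t)
    (hle : ∀ t ∈ Ioo a b, ⟪x t, x' t⟫ ≤ g t * ‖x t‖ ^ 2) :
    AntitoneOn (fun t => ‖x t‖ ^ 2 * exp (-(2 * ∫ s in a..t, g s))) (Icc a b) := by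
  rcases lt_or_ge b a with hba | hab
  · rw [Icc_eq_empty_of_lt hba]
    exact fun _ h => h.elim
  set F : ℝ → ℝ := fun t => ∫ s in a..t, g s
  have hFc : ContinuousOn F (Icc a b) := by
    simpa only [uIcc_of_le hab] using intervalIntegral.continuousOn_primitive_interval
      ((hg.integrableOn_compact isCompact_Icc).mono_set (uIcc_of_le hab).subset)
  have hF : ∀ t ∈ Ioo a b, HasDerivAt F (g t) t := fun t ht =>
    intervalIntegral.integral_hasDerivAt_right
      (hg.mono (by rw [uIcc_of_le ht.1.le]; exact Icc_subset_Icc_right ht.2.le)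
        |>.intervalIntegrable)
      (ContinuousOn.stronglyMeasurableAtFilter isOpen_Ioo (hg.mono Ioo_subset_Icc_self) t ht)
      (hg.continuousAt (Icc_mem_nhds ht.1 ht.2))
  refine antitoneOn_of_hasDerivWithinAt_nonpos (convex_Icc a b)
    (f' := fun t =>
      2 * ⟪x t, x' t⟫ * exp (-(2 * F t)) + ‖x t‖ ^ 2 * (exp (-(2 * F t)) * -(2 * g t)))
    ((continuous_norm.comp_continuousOn hxc).pow 2 |>.mul
      (continuous_exp.comp_continuousOn ((continuousOn_const.mul hFc).neg)))
    (fun t ht => ?_) (fun t ht => ?_) <;> rw [interior_Icc] at ht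
  · exact ((hx t ht).norm_sq.mul ((hF t ht).const_mul 2).neg.exp).hasDerivWithinAt
  · -- the derivative is `2 exp (-2 F t) (⟪x t, x' t⟫ - g t ‖x t‖²)`
    have := hle t ht
    have := exp_pos (-(2 * F t))
    nlinarith

lemma norm_le_norm_mul_exp_integral_of_inner_le (hab : a ≤ b) (hg : ContinuousOn g (Icc a b))
    (hxc : ContinuousOn x (Icc a b)) (hx : ∀ t ∈ Ioo a b, HasDerivAt x (x' t) t)
    (hle : ∀ t ∈ Ioo a b, ⟪x t, x' t⟫ ≤ g t * ‖x t‖ ^ 2) :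
    ‖x b‖ ≤ ‖x a‖ * exp (∫ s in a..b, g s) := by
  have hanti := antitoneOn_norm_sq_mul_exp_neg_integral hg hxc hx hle
    (left_mem_Icc.2 hab) (right_mem_Icc.2 hab) hab
  simp only [intervalIntegral.integral_same, mul_zero, neg_zero, exp_zero, mul_one] at hanti
  set I := ∫ s in a..b, g s
  have hexp : exp (-(2 * I)) * exp I ^ 2 = 1 := by
    rw [sq, ← exp_add, ← exp_add, show -(2 * I) + (I + I) = 0 by ring, exp_zero]
  refine (pow_le_pow_iff_left₀ (norm_nonneg _) (by positivity) two_ne_zero).1 ?_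
  calc ‖x b‖ ^ 2 = ‖x b‖ ^ 2 * exp (-(2 * I)) * exp I ^ 2 := by rw [mul_assoc, hexp, mul_one]
    _ ≤ ‖x a‖ ^ 2 * exp I ^ 2 := by gcongr
    _ = (‖x a‖ * exp I) ^ 2 := by ring

end Gronwall

/-- sufficiency part of Theorem 1, p = 2: if `∫₀ᵗ μ(A(s)) ds → -∞`
as `t → τ⁻`, then every solution of `x' = A(t) x` on `[0, τ)` satisfies `‖x t‖ → 0`. -/
theorem stmt1 {n : ℕ} (τ : ℝ) (hτ : 0 < τ)
    (A : ℝ → Matrix (Fin n) (Fin n) ℝ) (hA : ContinuousOn A (Set.Ico 0 τ))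
    (hint : Tendsto (fun t => ∫ s in (0 : ℝ)..t, logNorm (A s)) (𝓝[<] τ) atBot)
    (x : ℝ → EuclideanSpace ℝ (Fin n))
    (hx : ∀ t ∈ Set.Ico (0 : ℝ) τ, HasDerivAt x (mulVecE (A t) (x t)) t) :
    Tendsto (fun t => ‖x t‖) (𝓝[<] τ) (𝓝 0) := by
  have hg : ContinuousOn (fun s => logNorm (A s)) (Ico 0 τ) :=
    continuous_logNorm.comp_continuousOn hA
  have hbound : ∀ t ∈ Ico 0 τ, ‖x t‖ ≤ ‖x 0‖ * exp (∫ s in (0 : ℝ)..t, logNorm (A s)) := by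
    intro t ht
    have hsub : Icc 0 t ⊆ Ico 0 τ := Icc_subset_Ico_right ht.2
    exact norm_le_norm_mul_exp_integral_of_inner_le ht.1 (hg.mono hsub)
      (fun s hs => (hx s (hsub hs)).continuousAt.continuousWithinAt)
      (fun s hs => hx s (hsub (Ioo_subset_Icc_self hs)))
      (fun s _ => inner_mulVecE_le_logNorm_mul_norm_sq (A s) (x s))
  have hdecay :
      Tendsto (fun t => ‖x 0‖ * exp (∫ s in (0 : ℝ)..t, logNorm (A s))) (𝓝[<] τ) (𝓝 0) := by
    simpa using (tendsto_exp_atBot.comp hint).const_mul ‖x 0‖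
  refine tendsto_of_tendsto_of_tendsto_of_le_of_le' tendsto_const_nhds hdecay
    (Eventually.of_forall fun t => norm_nonneg _) ?_
  filter_upwards [Ioo_mem_nhdsLT hτ] with t ht using hbound t (Ioo_subset_Ico_self ht)
end

section
/- Let τ > 0 and let A : [0,τ) → ℝ^{n×n} be continuous. Assume the system ẋ = A(t)x is prescribed-time attractive at τ, and that for every pair of indices i,j, the entry A_{ij}(t) tends to a limit in the extended reals [−∞,+∞] as t → τ⁻. Then μ(−A(t)) → +∞ as t → τ⁻. -/
open Matrix Filter Topology

/-- The LTV system `x' = A t * x` is prescribed-time attractive (PTA) at time `τ`: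
every solution on `[0, τ)` satisfies `‖x t‖ → 0` as `t → τ⁻`. -/
def PTA {n : ℕ} (A : ℝ → Matrix (Fin n) (Fin n) ℝ) (τ : ℝ) : Prop :=
  ∀ x : ℝ → EuclideanSpace ℝ (Fin n),
    (∀ t ∈ Set.Ico (0 : ℝ) τ, HasDerivAt x (mulVecE (A t) (x t)) t) →
    Filter.Tendsto (fun t => ‖x t‖) (𝓝[<] τ) (𝓝 0)

/-! If `μ(-A(t))` does not tend to `+∞`, it stays below some `b` for `t` arbitrarily close to
`τ`. As `-Aᵢᵢ ≤ μ(-A)`, each diagonal entry is then `≥ -b` arbitrarily close to `τ`, so its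
limit in `[-∞, +∞]` is `≥ -b` and `Aᵢᵢ > -b - 1` near `τ`: the trace of `A` is bounded below
near `τ`. By Liouville's formula the determinant of a fundamental matrix is `exp ∫ tr A`, which
therefore stays away from `0` as `t → τ⁻`, whereas prescribed-time attractivity sends every
column, hence the determinant, to `0`. -/

open Set NNReal

theorem ContinuousOn.exists_nnnorm_le_Icc {F : Type*} [SeminormedAddCommGroup F] {f : ℝ → F}
    {a b : ℝ} (hf : ContinuousOn f (Icc a b)) :
    ∃ K : ℝ≥0, ∀ t ∈ Icc a b, ‖f t‖₊ ≤ K := by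
  obtain ⟨C, hC⟩ := isCompact_Icc.exists_bound_of_continuousOn hf
  refine ⟨C.toNNReal, fun t ht => ?_⟩
  rw [← NNReal.coe_le_coe, coe_nnnorm]
  exact (hC t ht).trans (Real.le_coe_toNNReal C)

section LinearODE

variable {E : Type*} [NormedAddCommGroup E] [NormedSpace ℝ E]

theorem IsIntegralCurveOn.piecewise_Icc {v : ℝ → E → E} {x y : ℝ → E} {a c d : ℝ}
    (hac : a ≤ c) (hcd : c ≤ d) (hx : IsIntegralCurveOn x v (Icc a c))
    (hy : IsIntegralCurveOn y v (Icc c d)) (hc : x c = y c) :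
    IsIntegralCurveOn (fun t => if t ≤ c then x t else y t) v (Icc a d) := by
  set z : ℝ → E := fun t => if t ≤ c then x t else y t
  have hzx : EqOn z x (Icc a c) := fun t ht => if_pos ht.2
  have hzy : EqOn z y (Icc c d) := fun t ht => by
    rcases ht.1.eq_or_lt with rfl | hlt
    · exact (if_pos le_rfl).trans hc
    · exact if_neg hlt.not_ge
  have hz₁ : IsIntegralCurveOn z v (Icc a c) := fun t ht => by
    rw [hzx ht]; exact (hx t ht).congr hzx (hzx ht)
  have hz₂ : IsIntegralCurveOn z v (Icc c d) := fun t ht => by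
    rw [hzy ht]; exact (hy t ht).congr hzy (hzy ht)
  intro t _
  have within : ∀ s, IsClosed s → IsIntegralCurveOn z v s → HasDerivWithinAt z (v t (z t)) s t :=
    fun s hs h => by
      by_cases hts : t ∈ s
      · exact h t hts
      · exact HasFDerivWithinAt.of_notMem_closure (by rwa [hs.closure_eq])
  rw [← Icc_union_Icc_eq_Icc hac hcd]
  exact (within _ isClosed_Icc hz₁).union (within _ isClosed_Icc hz₂)

variable {B : ℝ → E →L[ℝ] E}

theorem IsIntegralCurveOn.eqOn_clm_Icc {a b : ℝ} (hB : ContinuousOn B (Icc a b)) {x y : ℝ → E}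
    (hx : IsIntegralCurveOn x (fun t => B t) (Icc a b))
    (hy : IsIntegralCurveOn y (fun t => B t) (Icc a b)) (ha : x a = y a) :
    EqOn x y (Icc a b) := by
  obtain ⟨K, hK⟩ := hB.exists_nnnorm_le_Icc
  have right : ∀ z : ℝ → E, IsIntegralCurveOn z (fun t => B t) (Icc a b) →
      ∀ t ∈ Ico a b, HasDerivWithinAt z (B t (z t)) (Ici t) t := fun z hz t ht =>
    (hz t (Ico_subset_Icc_self ht)).mono_of_mem_nhdsWithin (Icc_mem_nhdsGE_of_mem ht)
  exact ODE_solution_unique_of_mem_Icc_right (s := fun _ => univ)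
    (fun t ht => ((B t).lipschitz.weaken (hK t (Ico_subset_Icc_self ht))).lipschitzOnWith)
    hx.continuousOn (right x hx) (fun _ _ => trivial) hy.continuousOn (right y hy)
    (fun _ _ => trivial) ha

variable [CompleteSpace E]

/- Picard–Lindelöf on the ball of radius `‖x₀‖ + 1` around `x₀`: for a linear field the
admissible time step does not depend on `x₀`. -/
theorem exists_isIntegralCurveOn_clm_Icc_of_two_mul_le {c d : ℝ} {K : ℝ≥0} (hcd : c ≤ d)
    (hB : ContinuousOn B (Icc c d)) (hK : ∀ t ∈ Icc c d, ‖B t‖₊ ≤ K)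
    (hstep : 2 * K * (d - c) ≤ 1) (x₀ : E) :
    ∃ x : ℝ → E, x c = x₀ ∧ IsIntegralCurveOn x (fun t => B t) (Icc c d) := by
  have hpl : IsPicardLindelof (fun t => B t) (tmin := c) (tmax := d) ⟨c, le_rfl, hcd⟩ x₀
      (‖x₀‖₊ + 1) 0 (K * (2 * ‖x₀‖₊ + 1)) K := by
    refine ⟨fun t ht => ((B t).lipschitz.weaken (hK t ht)).lipschitzOnWith,
      fun x _ => hB.clm_apply continuousOn_const, fun t ht x hx => ?_, ?_⟩
    · have hx' : ‖x‖ ≤ 2 * ‖x₀‖ + 1 := by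
        have := norm_le_norm_add_norm_sub' x x₀
        rw [Metric.mem_closedBall, dist_eq_norm] at hx
        push_cast at hx
        linarith
      calc ‖B t x‖ ≤ ‖B t‖ * ‖x‖ := (B t).le_opNorm x
        _ ≤ K * (2 * ‖x₀‖ + 1) := by gcongr; exact hK t ht
        _ = _ := by push_cast; ring
    · simp only [sub_self, max_eq_left (sub_nonneg.2 hcd)]
      push_cast
      nlinarith [norm_nonneg x₀, K.2]
  exact hpl.exists_eq_forall_mem_Icc_hasDerivWithinAt₀

theorem exists_isIntegralCurveOn_clm_Icc {a b : ℝ} (hab : a ≤ b) (hB : ContinuousOn B (Icc a b))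
    (x₀ : E) : ∃ x : ℝ → E, x a = x₀ ∧ IsIntegralCurveOn x (fun t => B t) (Icc a b) := by
  obtain ⟨K, hK⟩ := hB.exists_nnnorm_le_Icc
  set h : ℝ := 1 / (2 * K + 1)
  have hh : 0 < h := by positivity
  have hstep : 2 * K * h ≤ 1 := by
    rw [mul_one_div]; exact div_le_one_of_le₀ (by linarith) (by positivity)
  have reach : ∀ k : ℕ, ∃ x : ℝ → E, x a = x₀ ∧
      IsIntegralCurveOn x (fun t => B t) (Icc a (min (a + k * h) b)) := by
    intro k
    induction k with
    | zero =>
      simp only [Nat.cast_zero, zero_mul, add_zero, min_eq_left hab]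
      have hsub : Icc a a ⊆ Icc a b := Icc_subset_Icc_right hab
      exact exists_isIntegralCurveOn_clm_Icc_of_two_mul_le le_rfl (hB.mono hsub)
        (fun t ht => hK t (hsub ht)) (by simp) x₀
    | succ k ih =>
      obtain ⟨x, hx₀, hx⟩ := ih
      set c := min (a + k * h) b
      set d := min (a + (k + 1 : ℕ) * h) b
      have hac : a ≤ c := le_min (by nlinarith [k.cast_nonneg (α := ℝ)]) hab
      have hcd : c ≤ d := min_le_min_right _ (by push_cast; linarith)
      have hdc : d - c ≤ h := by simp only [c, d, min_def]; push_cast; split_ifs <;> linarith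
      have hsub : Icc c d ⊆ Icc a b := Icc_subset_Icc hac (min_le_right _ _)
      obtain ⟨y, hy₀, hy⟩ := exists_isIntegralCurveOn_clm_Icc_of_two_mul_le hcd (hB.mono hsub)
        (fun t ht => hK t (hsub ht)) (hstep.trans' (by gcongr)) (x c)
      exact ⟨_, by simp [hac, hx₀], hx.piecewise_Icc hac hcd hy hy₀.symm⟩
  obtain ⟨k, hk⟩ := exists_nat_ge ((b - a) / h)
  obtain ⟨x, hx₀, hx⟩ := reach k
  rw [min_eq_right (by rw [div_le_iff₀ hh] at hk; linarith)] at hx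
  exact ⟨x, hx₀, hx⟩

theorem exists_isIntegralCurveOn_clm_Ico {a b : ℝ} (hab : a < b) (hB : ContinuousOn B (Ico a b))
    (x₀ : E) : ∃ x : ℝ → E, x a = x₀ ∧ IsIntegralCurveOn x (fun t => B t) (Ico a b) := by
  have : ∀ c ∈ Ico a b, ∃ y : ℝ → E, y a = x₀ ∧ IsIntegralCurveOn y (fun t => B t) (Icc a c) :=
    fun c hc => exists_isIntegralCurveOn_clm_Icc hc.1 (hB.mono (Icc_subset_Ico_right hc.2)) x₀
  choose! y hy₀ hy using this
  have agree : ∀ c ∈ Ico a b, ∀ c' ∈ Ico a b, EqOn (y c) (y c') (Icc a (min c c')) :=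
    fun c hc c' hc' =>
      IsIntegralCurveOn.eqOn_clm_Icc (hB.mono (Icc_subset_Ico_right (min_lt_of_left_lt hc.2)))
        ((hy c hc).mono (Icc_subset_Icc_right (min_le_left _ _)))
        ((hy c' hc').mono (Icc_subset_Icc_right (min_le_right _ _)))
        ((hy₀ c hc).trans (hy₀ c' hc').symm)
  -- near `t`, the glued curve is the solution on `[a, m t]`, by `agree`
  set m : ℝ → ℝ := fun t => (t + b) / 2
  have hm : ∀ t ∈ Ico a b, m t ∈ Ico a b ∧ t < m t := fun t ht => by
    refine ⟨⟨?_, ?_⟩, ?_⟩ <;> simp only [m] <;> linarith [ht.1, ht.2]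
  refine ⟨fun t => y (m t) t, hy₀ _ (hm a ⟨le_rfl, hab⟩).1, fun t ht => ?_⟩
  have hIio : Iio (m t) ∈ 𝓝[Ico a b] t := nhdsWithin_le_nhds (Iio_mem_nhds (hm t ht).2)
  have hev : (fun s => y (m s) s) =ᶠ[𝓝[Ico a b] t] y (m t) := by
    filter_upwards [self_mem_nhdsWithin, hIio] with s hs hst
    exact agree _ (hm s hs).1 _ (hm t ht).1 ⟨hs.1, le_min (hm s hs).2.le hst.le⟩
  have hIcc : Icc a (m t) ∈ 𝓝[Ico a b] t := by
    filter_upwards [self_mem_nhdsWithin, hIio] with s hs hst using ⟨hs.1, hst.le⟩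
  exact ((hy _ (hm t ht).1 t ⟨ht.1, (hm t ht).2.le⟩).mono_of_mem_nhdsWithin hIcc)
    |>.congr_of_eventuallyEq hev rfl

end LinearODE

theorem eq_mul_exp_integral_of_hasDerivWithinAt {D g : ℝ → ℝ} {a b : ℝ} (hab : a ≤ b)
    (hg : ContinuousOn g (Icc a b))
    (hD : ∀ t ∈ Icc a b, HasDerivWithinAt D (g t * D t) (Icc a b) t) :
    D b = D a * Real.exp (∫ u in a..b, g u) := by
  set J : ℝ → ℝ := fun t => ∫ u in a..t, g u
  have hJ : ∀ t ∈ Icc a b, HasDerivWithinAt J (g t) (Icc a b) t := fun t ht => by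
    have : Fact (t ∈ Icc a b) := ⟨ht⟩
    exact intervalIntegral.integral_hasDerivWithinAt_right
      (hg.mono (uIcc_subset_Icc ⟨le_rfl, hab⟩ ht)).intervalIntegrable
      (hg.stronglyMeasurableAtFilter_nhdsWithin measurableSet_Icc t) (hg t ht)
  set F : ℝ → ℝ := fun t => D t * Real.exp (-J t)
  have hF : ∀ t ∈ Icc a b, HasDerivWithinAt F 0 (Icc a b) t := fun t ht => by
    have h := (hD t ht).fun_mul (hJ t ht).fun_neg.exp
    rwa [show g t * D t * Real.exp (-J t) + D t * (Real.exp (-J t) * -g t) = 0 by ring] at h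
  have hFb := constant_of_has_deriv_right_zero (fun t ht => (hF t ht).continuousWithinAt)
    (fun t ht => (hF t (Ico_subset_Icc_self ht)).mono_of_mem_nhdsWithin
      (Icc_mem_nhdsGE_of_mem ht)) b ⟨hab, le_rfl⟩
  simp only [F, J, intervalIntegral.integral_same, neg_zero, Real.exp_zero, mul_one] at hFb
  rw [← hFb, mul_assoc, ← Real.exp_add, neg_add_cancel, Real.exp_zero, mul_one]

theorem mul_exp_le_of_hasDerivWithinAt {D g : ℝ → ℝ} {a b m : ℝ} (hab : a ≤ b)
    (hg : ContinuousOn g (Icc a b))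
    (hD : ∀ t ∈ Icc a b, HasDerivWithinAt D (g t * D t) (Icc a b) t) (hDa : 0 ≤ D a)
    (hm : ∀ t ∈ Icc a b, m ≤ g t) : D a * Real.exp (m * (b - a)) ≤ D b := by
  rw [eq_mul_exp_integral_of_hasDerivWithinAt hab hg hD]
  gcongr
  calc m * (b - a) = ∫ _ in a..b, m := by simp [mul_comm]
    _ ≤ ∫ u in a..b, g u :=
      intervalIntegral.integral_mono_on hab intervalIntegrable_const
        (hg.intervalIntegrable_of_Icc hab) hm

theorem Matrix.continuous_toEuclideanCLM {ι : Type*} [Fintype ι] [DecidableEq ι] :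
    Continuous (toEuclideanCLM (𝕜 := ℝ) (n := ι)) :=
  LinearMap.continuous_of_finiteDimensional
    (toEuclideanCLM (𝕜 := ℝ) (n := ι)).toAlgEquiv.toLinearEquiv.toLinearMap

theorem Matrix.sum_det_updateRow_mul {ι R : Type*} [Fintype ι] [DecidableEq ι] [CommRing R]
    (B P : Matrix ι ι R) : ∑ i, (P.updateRow i ((B * P) i)).det = B.trace * P.det := by
  have hrow : ∀ i, (B * P) i = ∑ k, B i k • P k := fun i => by ext j; simp [mul_apply]
  simp only [hrow, det_updateRow_sum, smul_eq_mul, ← Finset.sum_mul, trace, diag]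

theorem hasDerivWithinAt_det {ι : Type*} [Fintype ι] [DecidableEq ι] {Φ : ℝ → ι → ι → ℝ}
    {Φ' : ι → ι → ℝ} {s : Set ℝ} {t : ℝ} (h : HasDerivWithinAt Φ Φ' s t) :
    HasDerivWithinAt (fun u => (of (Φ u)).det)
      (∑ i, ((of (Φ t)).updateRow i (Φ' i)).det) s t := by
  let D : ContinuousMultilinearMap ℝ (fun _ : ι => ι → ℝ) ℝ :=
    ⟨detRowAlternating.toMultilinearMap, continuous_id.matrix_det⟩
  have hD := (D.hasFDerivAt (Φ t)).comp_hasDerivWithinAt t h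
  rw [ContinuousMultilinearMap.linearDeriv_apply] at hD
  exact hD

theorem hasDerivWithinAt_det_of_mulVecE {n : ℕ} {B : Matrix (Fin n) (Fin n) ℝ}
    {xs : Fin n → ℝ → EuclideanSpace ℝ (Fin n)} {s : Set ℝ} {t : ℝ}
    (hxs : ∀ j, HasDerivWithinAt (xs j) (mulVecE B (xs j t)) s t) :
    HasDerivWithinAt (fun u => (of fun i j => xs j u i).det)
      (B.trace * (of fun i j => xs j t i).det) s t := by
  have hΦ : HasDerivWithinAt (fun u i j => xs j u i) (B * of fun i j => xs j t i) s t := by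
    refine hasDerivWithinAt_pi.2 fun i => hasDerivWithinAt_pi.2 fun j => ?_
    have hval : mulVecE B (xs j t) i = (B * of fun i j => xs j t i) i j := by
      simp [mulVecE, ofLp_toEuclideanCLM, mulVec, dotProduct, mul_apply]
    rw [← hval]
    exact (PiLp.hasFDerivAt_apply 2 (xs j t) i).comp_hasDerivWithinAt t (hxs j)
  rw [← sum_det_updateRow_mul]
  exact hasDerivWithinAt_det hΦ

theorem tendsto_det_of_tendsto_norm_zero {α : Type*} {l : Filter α} {n : ℕ} (hn : 0 < n)
    {xs : Fin n → α → EuclideanSpace ℝ (Fin n)} (h : ∀ j, Tendsto (fun t => ‖xs j t‖) l (𝓝 0)) :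
    Tendsto (fun t => (of fun i j => xs j t i).det) l (𝓝 0) := by
  have hΦ : Tendsto (fun t => of fun i j => xs j t i) l (𝓝 0) :=
    tendsto_pi_nhds.2 fun i => tendsto_pi_nhds.2 fun j =>
      squeeze_zero_norm (fun t => PiLp.norm_apply_le (xs j t) i) (h j)
  have : Nonempty (Fin n) := ⟨⟨0, hn⟩⟩
  simpa [Function.comp_def] using (continuous_id.matrix_det.tendsto 0).comp hΦ

theorem not_tendsto_det_nhds_zero {n : ℕ} {a τ m : ℝ} (haτ : a < τ)
    {B : ℝ → Matrix (Fin n) (Fin n) ℝ} (hB : ContinuousOn B (Ico a τ))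
    {xs : Fin n → ℝ → EuclideanSpace ℝ (Fin n)}
    (hxs : ∀ j, IsIntegralCurveOn (xs j) (fun t => mulVecE (B t)) (Ico a τ))
    (hxa : 0 < (of fun i j => xs j a i).det) (hm : ∀ᶠ t in 𝓝[<] τ, m ≤ (B t).trace) :
    ¬ Tendsto (fun t => (of fun i j => xs j t i).det) (𝓝[<] τ) (𝓝 0) := by
  set D : ℝ → ℝ := fun t => (of fun i j => xs j t i).det
  set g : ℝ → ℝ := fun t => (B t).trace
  have hg : ∀ {c d}, a ≤ c → d < τ → ContinuousOn g (Icc c d) := fun hc hd =>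
    (continuous_id.matrix_trace.comp_continuousOn hB).mono
      fun u hu => ⟨hc.trans hu.1, hu.2.trans_lt hd⟩
  have hD : ∀ {c d}, a ≤ c → d < τ → ∀ t ∈ Icc c d, HasDerivWithinAt D (g t * D t) (Icc c d) t :=
    fun hc hd t ht => (hasDerivWithinAt_det_of_mulVecE fun j =>
      hxs j t ⟨hc.trans ht.1, ht.2.trans_lt hd⟩).mono fun u hu => ⟨hc.trans hu.1, hu.2.trans_lt hd⟩
  obtain ⟨l, hl, hlm⟩ := mem_nhdsLT_iff_exists_Ioo_subset.1 hm
  set t₁ := (max l a + τ) / 2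
  have hlt₁ : max l a < t₁ := by simp only [t₁]; linarith [max_lt hl haτ]
  have ht₁τ : t₁ < τ := by simp only [t₁]; linarith [max_lt hl haτ]
  have hat₁ : a ≤ t₁ := (le_max_right l a).trans hlt₁.le
  have hDt₁ : 0 < D t₁ := by
    rw [eq_mul_exp_integral_of_hasDerivWithinAt hat₁ (hg le_rfl ht₁τ) (hD le_rfl ht₁τ)]
    positivity
  have hlower : ∀ᶠ t in 𝓝[<] τ, D t₁ * Real.exp (m * (t - t₁)) ≤ D t := by
    filter_upwards [Ioo_mem_nhdsLT ht₁τ] with t ht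
    exact mul_exp_le_of_hasDerivWithinAt ht.1.le (hg hat₁ ht.2) (hD hat₁ ht.2) hDt₁.le
      fun u hu => hlm ⟨(le_max_left l a).trans_lt (hlt₁.trans_le hu.1), hu.2.trans_lt ht.2⟩
  have hbound : Tendsto (fun t => D t₁ * Real.exp (m * (t - t₁))) (𝓝[<] τ)
      (𝓝 (D t₁ * Real.exp (m * (τ - t₁)))) :=
    ((continuous_const.mul (continuous_const.mul (continuous_id.sub continuous_const)).rexp).tendsto
      τ).mono_left nhdsWithin_le_nhds
  intro hD0
  exact (le_of_tendsto_of_tendsto hbound hD0 hlower).not_gt (by positivity)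

theorem Matrix.IsHermitian.apply_self_le_lamMax {n : ℕ} {M : Matrix (Fin n) (Fin n) ℝ}
    (hM : M.IsHermitian) (i : Fin n) : M i i ≤ lamMax M := by
  have hle : ∀ k, hM.eigenvalues k ≤ lamMax M := fun k => by
    rw [lamMax, eigs, dif_pos hM]
    exact le_ciSup (Set.finite_range _).bddAbove k
  set v := hM.eigenvectorBasis
  have hrow : ∑ k, v k i * v k i = 1 := by
    simpa [mul_apply, one_apply, star_apply] using
      congrFun (congrFun (mem_unitaryGroup_iff.mp hM.eigenvectorUnitary.2) i) i
  have hdiag : M i i = ∑ k, hM.eigenvalues k * (v k i * v k i) := by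
    conv_lhs => rw [hM.spectral_theorem]
    simp [Unitary.conjStarAlgAut_apply, mul_apply, v, diagonal_apply, mul_comm, mul_left_comm]
  calc M i i = ∑ k, hM.eigenvalues k * (v k i * v k i) := hdiag
    _ ≤ ∑ k, lamMax M * (v k i * v k i) := by gcongr with k; exacts [mul_self_nonneg _, hle k]
    _ = lamMax M := by rw [← Finset.mul_sum, hrow, mul_one]

theorem neg_apply_self_le_logNorm_neg {n : ℕ} (M : Matrix (Fin n) (Fin n) ℝ) (i : Fin n) :
    -M i i ≤ logNorm (-M) := by
  have hsymm : ((1 / 2 : ℝ) • (-M + (-M)ᵀ)).IsHermitian := by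
    ext a b
    simp only [conjTranspose_apply, Matrix.smul_apply, Matrix.add_apply, transpose_apply,
      star_trivial]
    ring
  calc -M i i = ((1 / 2 : ℝ) • (-M + (-M)ᵀ)) i i := by simp; ring
    _ ≤ logNorm (-M) := hsymm.apply_self_le_lamMax i

theorem eventually_le_trace_of_frequently_logNorm_neg_lt {α : Type*} {l : Filter α} {n : ℕ}
    {A : α → Matrix (Fin n) (Fin n) ℝ} {b : ℝ}
    (hlim : ∀ i, ∃ L : EReal, Tendsto (fun t => ((A t i i : ℝ) : EReal)) l (𝓝 L))
    (hfreq : ∃ᶠ t in l, logNorm (-A t) < b) : ∀ᶠ t in l, n * (-b - 1) ≤ (A t).trace := by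
  have hdiag : ∀ i, ∀ᶠ t in l, -b - 1 < A t i i := fun i => by
    obtain ⟨L, hL⟩ := hlim i
    have hLb : ((-b : ℝ) : EReal) ≤ L := isClosed_Ici.mem_of_frequently_of_tendsto
      (hfreq.mono fun t ht => EReal.coe_le_coe_iff.2 <| show -b ≤ A t i i by
        linarith [neg_apply_self_le_logNorm_neg (A t) i]) hL
    filter_upwards [hL.eventually_const_lt
      ((EReal.coe_lt_coe_iff.2 (show -b - 1 < -b by linarith)).trans_le hLb)] with t ht
    exact EReal.coe_lt_coe_iff.1 ht
  filter_upwards [eventually_all.2 hdiag] with t ht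
  calc (n : ℝ) * (-b - 1) = ∑ _i : Fin n, (-b - 1) := by simp; ring
    _ ≤ (A t).trace := Finset.sum_le_sum fun i _ => (ht i).le

/-- necessity part (8) of Theorem 1, p = 2: if the system is PTA at `τ`
and every entry of `A` has a limit in the extended reals as `t → τ⁻`,
then `μ(-A(t)) → +∞` as `t → τ⁻`. -/
theorem stmt2 {n : ℕ} (hn : 0 < n) (τ : ℝ) (hτ : 0 < τ)
    (A : ℝ → Matrix (Fin n) (Fin n) ℝ) (hA : ContinuousOn A (Set.Ico 0 τ))
    (hPTA : PTA A τ)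
    (hlim : ∀ i j : Fin n, ∃ L : EReal,
      Tendsto (fun t => ((A t i j : ℝ) : EReal)) (𝓝[<] τ) (𝓝 L)) :
    Tendsto (fun t => logNorm (-(A t))) (𝓝[<] τ) atTop := by
  by_contra hcon
  obtain ⟨b, hb⟩ : ∃ b, ∃ᶠ t in 𝓝[<] τ, logNorm (-A t) < b := by
    simpa [tendsto_atTop, Filter.not_eventually] using hcon
  -- extending `A` to the left by `A 0` makes the solutions differentiable at `0`, as `PTA` asks
  set Ā : ℝ → Matrix (Fin n) (Fin n) ℝ := fun t => A (max t 0)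
  have hĀ : ContinuousOn Ā (Ico (-1) τ) :=
    hA.comp (continuous_id.max continuous_const).continuousOn
      fun t ht => ⟨le_max_right _ _, max_lt ht.2 hτ⟩
  have hτ₁ : (-1 : ℝ) < τ := by linarith
  choose xs hxs₀ hxs using fun j : Fin n => exists_isIntegralCurveOn_clm_Ico hτ₁
    (continuous_toEuclideanCLM.comp_continuousOn hĀ) (EuclideanSpace.single j 1)
  have hsol : ∀ j, ∀ t ∈ Ico 0 τ, HasDerivAt (xs j) (mulVecE (A t) (xs j t)) t := fun j t ht => by
    have h := ((hxs j).isIntegralCurveAt (Ico_mem_nhds (by linarith [ht.1]) ht.2)).hasDerivAt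
    rwa [Function.comp_apply, show Ā t = A t by simp only [Ā, max_eq_left ht.1]] at h
  have htr : ∀ᶠ t in 𝓝[<] τ, n * (-b - 1) ≤ (Ā t).trace := by
    filter_upwards [eventually_le_trace_of_frequently_logNorm_neg_lt (fun i => hlim i i) hb,
      Ioo_mem_nhdsLT hτ] with t ht ht₀
    simpa [Ā, max_eq_left ht₀.1.le] using ht
  have hΦ₀ : (of fun i j => xs j (-1) i) = 1 := by
    ext i j; simp [hxs₀, one_apply]
  exact not_tendsto_det_nhds_zero hτ₁ hĀ hxs (by simp [hΦ₀]) htr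
    (tendsto_det_of_tendsto_norm_zero hn fun j => hPTA _ (hsol j))
end

section
/- Let τ > 0, ε ∈ (0,τ), let A : [0,τ) → ℝ^{n×n} be continuous, and let P : [τ−ε,τ) → ℝ^{n×n} be continuously differentiable with P(t) symmetric and positive definite for each t, satisfying Ṗ(t) + A(t)ᵀP(t) + P(t)A(t) negative semidefinite for all t ∈ [τ−ε,τ) and λ_min(P(t)) → +∞ as t → τ⁻. Then every differentiable x : [0,τ) → ℝⁿ with x'(t) = A(t)x(t) satisfies ‖x(t)‖ → 0 as t → τ⁻; i.e., the system ẋ = A(t)x is prescribed-time attractive at τ. -/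
/-!
Along a solution, `V t = x(t)ᵀ P(t) x(t)` has derivative `xᵀ (Ṗ + AᵀP + PA) x ≤ 0`, so `V` is
nonincreasing near `τ` and hence bounded there. Since `λ_min(P t) ‖x t‖² ≤ V t` and
`λ_min(P t) → ∞`, this forces `‖x t‖ → 0`.
-/

open Matrix Filter Topology

open scoped MatrixOrder

theorem Matrix.IsHermitian.mul_dotProduct_le_dotProduct_mulVec {ι : Type*} [Fintype ι]
    [DecidableEq ι] {M : Matrix ι ι ℝ} (hM : M.IsHermitian) {c : ℝ}
    (hc : ∀ i, c ≤ hM.eigenvalues i) (v : ι → ℝ) : c * (v ⬝ᵥ v) ≤ v ⬝ᵥ (M *ᵥ v) := by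
  -- the Loewner order `c • 1 ≤ M`, read off the spectrum by the functional calculus
  have hcM : algebraMap ℝ _ c ≤ M := by
    rw [algebraMap_le_iff_le_spectrum hM.isSelfAdjoint, hM.spectrum_real_eq_range_eigenvalues]
    rintro _ ⟨i, rfl⟩
    exact hc i
  simpa [sub_mulVec, Algebra.algebraMap_eq_smul_one, smul_mulVec, dotProduct_smul] using
    (Matrix.le_iff.mp hcM).dotProduct_mulVec_nonneg v

theorem lamMin_mul_dotProduct_le {n : ℕ} {M : Matrix (Fin n) (Fin n) ℝ} (hM : M.IsHermitian)
    (v : Fin n → ℝ) : lamMin M * (v ⬝ᵥ v) ≤ v ⬝ᵥ (M *ᵥ v) :=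
  have heigs : eigs M = hM.eigenvalues := dif_pos hM
  hM.mul_dotProduct_le_dotProduct_mulVec
    (fun i => heigs ▸ ciInf_le (Set.finite_range (eigs M)).bddBelow i) v

theorem EuclideanSpace.real_norm_sq_eq_dotProduct {ι : Type*} [Fintype ι]
    (v : EuclideanSpace ℝ ι) : ‖v‖ ^ 2 = v.ofLp ⬝ᵥ v.ofLp := by
  rw [EuclideanSpace.real_norm_sq_eq]
  simp [dotProduct, sq]

theorem HasDerivAt.ofLp {ι : Type*} [Fintype ι] {x : ℝ → EuclideanSpace ℝ ι}
    {x' : EuclideanSpace ℝ ι} {t : ℝ} (hx : HasDerivAt x x' t) :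
    HasDerivAt (fun s => (x s).ofLp) x'.ofLp t :=
  (PiLp.hasFDerivAt_ofLp 2 (x t)).comp_hasDerivAt t hx

theorem HasDerivAt.dotProduct_mulVec_self {ι : Type*} [Fintype ι] {v : ℝ → ι → ℝ}
    {v' : ι → ℝ} {M : ℝ → Matrix ι ι ℝ} {M' : Matrix ι ι ℝ} {t : ℝ} (hv : HasDerivAt v v' t)
    (hM : ∀ i j, HasDerivAt (fun s => M s i j) (M' i j) t) :
    HasDerivAt (fun s => v s ⬝ᵥ (M s *ᵥ v s))
      (v' ⬝ᵥ (M t *ᵥ v t) + v t ⬝ᵥ (M' *ᵥ v t) + v t ⬝ᵥ (M t *ᵥ v')) t := by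
  have hvi : ∀ i, HasDerivAt (fun s => v s i) (v' i) t := hasDerivAt_pi.mp hv
  have hsum := HasDerivAt.fun_sum fun i (_ : i ∈ Finset.univ) => HasDerivAt.fun_sum
    fun j (_ : j ∈ Finset.univ) => (hvi i).fun_mul ((hM i j).fun_mul (hvi j))
  have hexpand : (fun s => v s ⬝ᵥ (M s *ᵥ v s)) = fun s => ∑ i, ∑ j, v s i * (M s i j * v s j) := by
    ext s
    simp only [dotProduct, mulVec, Finset.mul_sum]
  rw [hexpand]
  refine hsum.congr_deriv ?_
  simp only [dotProduct, mulVec, Finset.mul_sum, ← Finset.sum_add_distrib]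
  refine Finset.sum_congr rfl fun i _ => Finset.sum_congr rfl fun j _ => ?_
  ring

theorem HasDerivAt.dotProduct_mulVec_self_of_linear {ι : Type*} [Fintype ι] {v : ℝ → ι → ℝ}
    {A : Matrix ι ι ℝ} {M : ℝ → Matrix ι ι ℝ} {M' : Matrix ι ι ℝ} {t : ℝ}
    (hv : HasDerivAt v (A *ᵥ v t) t) (hM : ∀ i j, HasDerivAt (fun s => M s i j) (M' i j) t) :
    HasDerivAt (fun s => v s ⬝ᵥ (M s *ᵥ v s))
      (v t ⬝ᵥ ((M' + Aᵀ * M t + M t * A) *ᵥ v t)) t := by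
  convert hv.dotProduct_mulVec_self hM using 1
  rw [add_mulVec, add_mulVec, dotProduct_add, dotProduct_add, ← mulVec_mulVec, ← mulVec_mulVec,
    dotProduct_mulVec _ Aᵀ, vecMul_transpose, dotProduct_comm (v t) (M t *ᵥ _)]
  ring

theorem exists_eventually_le_of_hasDerivAt_nonpos {V V' : ℝ → ℝ} {b : ℝ}
    (h : ∀ᶠ t in 𝓝[<] b, HasDerivAt V (V' t) t ∧ V' t ≤ 0) :
    ∃ C, ∀ᶠ t in 𝓝[<] b, V t ≤ C := by
  obtain ⟨a, hab : a < b, hsub⟩ := mem_nhdsLT_iff_exists_Ioo_subset.mp h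
  have hanti : AntitoneOn V (Set.Ioo a b) :=
    antitoneOn_of_hasDerivWithinAt_nonpos (convex_Ioo a b)
      (fun s hs => (hsub hs).1.continuousAt.continuousWithinAt)
      (fun s hs => (hsub (interior_subset hs)).1.hasDerivWithinAt)
      (fun s hs => (hsub (interior_subset hs)).2)
  obtain ⟨c, hac, hcb⟩ := exists_between hab
  refine ⟨V c, ?_⟩
  filter_upwards [Ioo_mem_nhdsLT hcb] with t ht
  exact hanti ⟨hac, hcb⟩ ⟨hac.trans ht.1, ht.2⟩ ht.1.le

theorem tendsto_zero_of_mul_sq_le {α : Type*} {l : Filter α} {f g : α → ℝ} {C : ℝ}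
    (hf : Tendsto f l atTop) (hfg : ∀ᶠ a in l, f a * g a ^ 2 ≤ C) (hg : ∀ a, 0 ≤ g a) :
    Tendsto g l (𝓝 0) := by
  have hsq : Tendsto (fun a => g a ^ 2) l (𝓝 0) := by
    refine squeeze_zero' (.of_forall fun a => sq_nonneg _) ?_ (hf.const_div_atTop C)
    filter_upwards [hfg, hf.eventually_gt_atTop 0] with a ha hpos
    rw [le_div_iff₀ hpos, mul_comm]
    exact ha
  simpa [Real.sqrt_sq (hg _)] using hsq.sqrt

theorem stmt9_general {n : ℕ} (τ ε : ℝ) (hτ : 0 < τ) (hε : 0 < ε)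
    (A : ℝ → Matrix (Fin n) (Fin n) ℝ)
    (P P' : ℝ → Matrix (Fin n) (Fin n) ℝ)
    (hPsymm : ∀ t ∈ Set.Ico (τ - ε) τ, (P t).IsHermitian)
    (hPderiv : ∀ t ∈ Set.Ico (τ - ε) τ, ∀ i j, HasDerivAt (fun s => P s i j) (P' t i j) t)
    (hLyap : ∀ t ∈ Set.Ico (τ - ε) τ, ∀ v : Fin n → ℝ,
      v ⬝ᵥ ((P' t + (A t)ᵀ * P t + P t * A t) *ᵥ v) ≤ 0)
    (hmin : Tendsto (fun t => lamMin (P t)) (𝓝[<] τ) atTop)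
    (x : ℝ → EuclideanSpace ℝ (Fin n))
    (hx : ∀ t ∈ Set.Ico (0 : ℝ) τ, HasDerivAt x (mulVecE (A t) (x t)) t) :
    Tendsto (fun t => ‖x t‖) (𝓝[<] τ) (𝓝 0) := by
  have hnear : ∀ᶠ t in 𝓝[<] τ, t ∈ Set.Ico (τ - ε) τ ∧ t ∈ Set.Ico 0 τ :=
    inter_mem (Ico_mem_nhdsLT (sub_lt_self τ hε)) (Ico_mem_nhdsLT hτ)
  have hxE : ∀ t ∈ Set.Ico 0 τ, HasDerivAt (fun s => (x s).ofLp) (A t *ᵥ (x t).ofLp) t :=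
    fun t ht => by simpa only [mulVecE, ofLp_toEuclideanCLM] using (hx t ht).ofLp
  obtain ⟨C, hC⟩ := exists_eventually_le_of_hasDerivAt_nonpos <| hnear.mono
    fun t ⟨hPt, hxt⟩ => ⟨(hxE t hxt).dotProduct_mulVec_self_of_linear (hPderiv t hPt),
      hLyap t hPt _⟩
  refine tendsto_zero_of_mul_sq_le (C := C) hmin ?_ fun t => norm_nonneg (x t)
  filter_upwards [hC, hnear] with t hCt hnt
  rw [EuclideanSpace.real_norm_sq_eq_dotProduct]
  exact (lamMin_mul_dotProduct_le (hPsymm t hnt.1) _).trans hCt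

/-- sufficiency direction of Theorem 2: a C¹ symmetric positive-definite
`P` on `[τ-ε, τ)` with `Ṗ + AᵀP + PA ≤ 0` and `λ_min(P(t)) → +∞` forces every solution
of `x' = A(t) x` to satisfy `‖x t‖ → 0` as `t → τ⁻`. -/
theorem stmt9 {n : ℕ} (τ ε : ℝ) (hτ : 0 < τ) (hε : 0 < ε) (hετ : ε < τ)
    (A : ℝ → Matrix (Fin n) (Fin n) ℝ) (hA : ContinuousOn A (Set.Ico 0 τ))
    (P P' : ℝ → Matrix (Fin n) (Fin n) ℝ)
    (hPsymm : ∀ t ∈ Set.Ico (τ - ε) τ, (P t).IsHermitian)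
    (hPpos : ∀ t ∈ Set.Ico (τ - ε) τ, ∀ v : Fin n → ℝ, v ≠ 0 → 0 < v ⬝ᵥ (P t *ᵥ v))
    (hPderiv : ∀ t ∈ Set.Ico (τ - ε) τ, ∀ i j, HasDerivAt (fun s => P s i j) (P' t i j) t)
    (hP'cont : ContinuousOn P' (Set.Ico (τ - ε) τ))
    (hLyap : ∀ t ∈ Set.Ico (τ - ε) τ, ∀ v : Fin n → ℝ,
      v ⬝ᵥ ((P' t + (A t)ᵀ * P t + P t * A t) *ᵥ v) ≤ 0)
    (hmin : Tendsto (fun t => lamMin (P t)) (𝓝[<] τ) atTop)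
    (x : ℝ → EuclideanSpace ℝ (Fin n))
    (hx : ∀ t ∈ Set.Ico (0 : ℝ) τ, HasDerivAt x (mulVecE (A t) (x t)) t) :
    Tendsto (fun t => ‖x t‖) (𝓝[<] τ) (𝓝 0) :=
  stmt9_general τ ε hτ hε A P P' hPsymm hPderiv hLyap hmin x hx
end

section
/- Let τ > 0 and define A : [0,τ) → ℝ^{2×2} by A(t) = diag(−1, −1/(τ−t)). Then: (i) ‖A(t)‖ → +∞ as t → τ⁻ (operator norm induced by the Euclidean norm); (ii) for every t ∈ [0,τ) both eigenvalues of A(t) are negative; yet (iii) the system ẋ = A(t)x is not prescribed-time attractive at τ: any differentiable x : [0,τ) → ℝ² with x'(t) = A(t)x(t) and x₁(0) ≠ 0 satisfies ‖x(t)‖ ≥ |x₁(0)|·e^{−τ} > 0 for all t ∈ [0,τ). -/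
open Matrix Filter Topology

lemma eig_diag_mem {n : ℕ} (d : Fin n → ℝ) (h : (Matrix.diagonal d).IsHermitian) (i : Fin n) :
    ∃ j, h.eigenvalues i = d j := by
  have hv := h.mulVec_eigenvectorBasis i
  have hne : (⇑(h.eigenvectorBasis i) : Fin n → ℝ) ≠ 0 := by
    intro h0
    have := h.eigenvectorBasis.orthonormal.1 i
    rw [show (h.eigenvectorBasis i) = 0 from ?_, norm_zero] at this
    · norm_num at this
    · ext j; exact congrFun h0 j
  obtain ⟨j, hj⟩ := Function.ne_iff.1 hne
  refine ⟨j, ?_⟩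
  have := congrFun hv j
  simp [Matrix.mulVec_diagonal] at this
  rcases this with h1 | h2
  · exact h1.symm
  · exact absurd h2 hj

lemma abs_coord_le_norm (v : EuclideanSpace ℝ (Fin 2)) (i : Fin 2) : |v i| ≤ ‖v‖ := by
  rw [EuclideanSpace.norm_eq]
  rw [show |v i| = Real.sqrt (|v i| ^ 2) by rw [Real.sqrt_sq_eq_abs, abs_abs]]
  apply Real.sqrt_le_sqrt
  fin_cases i <;> · simp [Fin.sum_univ_two]; positivity

/-- counterexample of Remark 2: for `A(t) = diag(-1, -1/(τ-t))`,
the operator norm blows up at `τ`, the frozen-time eigenvalues are negative on `[0, τ)`,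
yet any solution with `x₁(0) ≠ 0` satisfies `‖x t‖ ≥ |x₁(0)| e^{-τ} > 0`,
so the system is not PTA. -/
theorem stmt14 (τ : ℝ) (hτ : 0 < τ)
    (A : ℝ → Matrix (Fin 2) (Fin 2) ℝ)
    (hA : ∀ t, A t = Matrix.diagonal ![(-1 : ℝ), -1 / (τ - t)]) :
    Tendsto (fun t => opNorm (A t)) (𝓝[<] τ) atTop ∧
    (∀ t ∈ Set.Ico (0 : ℝ) τ, ∀ i, eigs (A t) i < 0) ∧
    (∀ x : ℝ → EuclideanSpace ℝ (Fin 2),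
      (∀ t ∈ Set.Ico (0 : ℝ) τ, HasDerivAt x (mulVecE (A t) (x t)) t) →
      x 0 0 ≠ 0 →
      ∀ t ∈ Set.Ico (0 : ℝ) τ,
        |x 0 0| * Real.exp (-τ) ≤ ‖x t‖ ∧ 0 < |x 0 0| * Real.exp (-τ)) := by
  refine ⟨?_, ?_, ?_⟩
  · -- operator norm blows up
    have hlow : ∀ t ∈ Set.Iio τ, (τ - t)⁻¹ ≤ opNorm (A t) := by
      intro t ht
      have htpos : 0 < τ - t := by simp at ht; linarith
      have he : mulVecE (A t) (EuclideanSpace.single 1 1) =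
          EuclideanSpace.single 1 (-1 / (τ - t)) := by
        ext i
        have : mulVecE (A t) (EuclideanSpace.single 1 1) i =
            (A t *ᵥ fun j => (EuclideanSpace.single (1 : Fin 2) (1 : ℝ)) j) i := rfl
        rw [this, hA]
        fin_cases i <;> simp [Matrix.mulVec_diagonal, EuclideanSpace.single_apply]
      have h1 : ‖mulVecE (A t) (EuclideanSpace.single 1 1)‖ ≤ opNorm (A t) := by
        apply ContinuousLinearMap.unit_le_opNorm
        rw [EuclideanSpace.norm_single]; simp
      rw [he, EuclideanSpace.norm_single] at h1
      rw [show ‖(-1 / (τ - t) : ℝ)‖ = (τ - t)⁻¹ by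
        rw [Real.norm_eq_abs, abs_div, abs_neg, abs_one, abs_of_pos htpos, one_div]] at h1
      exact h1
    apply tendsto_atTop_mono' _ (eventually_nhdsWithin_of_forall hlow)
    have h0 : Tendsto (fun t => τ - t) (𝓝[<] τ) (𝓝[>] 0) := by
      rw [tendsto_nhdsWithin_iff]
      constructor
      · have : Tendsto (fun t : ℝ => τ - t) (𝓝 τ) (𝓝 (τ - τ)) :=
          (tendsto_const_nhds.sub tendsto_id)
        simpa using this.mono_left nhdsWithin_le_nhds
      · filter_upwards [self_mem_nhdsWithin] with t ht
        simp only [Set.mem_Iio] at ht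
        simp [Set.mem_Ioi]; linarith
    exact tendsto_inv_nhdsGT_zero.comp h0
  · -- eigenvalues negative
    intro t ht i
    obtain ⟨ht0, htτ⟩ := ht
    have hH : (A t).IsHermitian := by
      rw [hA]; exact Matrix.isHermitian_diagonal _
    rw [eigs, dif_pos hH]
    have : ∃ j, hH.eigenvalues i = (![(-1 : ℝ), -1 / (τ - t)]) j := by
      have hH' : (Matrix.diagonal ![(-1 : ℝ), -1 / (τ - t)]).IsHermitian := by
        rw [← hA]; exact hH
      obtain ⟨j, hj⟩ := eig_diag_mem (![(-1 : ℝ), -1 / (τ - t)]) hH' i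
      refine ⟨j, ?_⟩
      rw [← hj]
      congr 1
      · exact hA t
    obtain ⟨j, hj⟩ := this
    rw [hj]
    have htpos : 0 < τ - t := by linarith
    fin_cases j
    · norm_num
    · show (-1 : ℝ) / (τ - t) < 0
      exact div_neg_of_neg_of_pos (by norm_num) htpos
  · -- not PTA
    intro x hx hx0 t ht
    obtain ⟨ht0, htτ⟩ := ht
    have hpos : 0 < |x 0 0| * Real.exp (-τ) := by
      apply mul_pos (abs_pos.2 hx0) (Real.exp_pos _)
    refine ⟨?_, hpos⟩
    -- first component derivative
    set y : ℝ → ℝ := fun s => x s 0 with hy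
    have hyd : ∀ s ∈ Set.Ico (0 : ℝ) τ, HasDerivAt y (-(y s)) s := by
      intro s hs
      have hds := hx s hs
      have hproj := (EuclideanSpace.proj (0 : Fin 2) (𝕜 := ℝ)).hasFDerivAt.comp_hasDerivAt s hds
      have hcoord : (EuclideanSpace.proj (0 : Fin 2) (𝕜 := ℝ)) (mulVecE (A s) (x s)) = -(y s) := by
        have h1 : (EuclideanSpace.proj (0 : Fin 2) (𝕜 := ℝ)) (mulVecE (A s) (x s)) =
            (A s *ᵥ fun j => x s j) 0 := rfl
        rw [h1, hA]
        simp [Matrix.mulVec_diagonal, hy]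
      rw [hcoord] at hproj
      exact hproj
    -- g s = y s * exp s is constant on [0, t]
    set g : ℝ → ℝ := fun s => y s * Real.exp s with hg
    have hgd : ∀ s ∈ Set.Ico (0 : ℝ) t, HasDerivWithinAt g 0 (Set.Ici s) s := by
      intro s hs
      have hs' : s ∈ Set.Ico (0 : ℝ) τ := ⟨hs.1, lt_trans hs.2 htτ⟩
      have := ((hyd s hs').mul (Real.hasDerivAt_exp s))
      have h0 : -(y s) * Real.exp s + y s * Real.exp s = 0 := by ring
      rw [h0] at this
      exact this.hasDerivWithinAt
    have hgc : ContinuousOn g (Set.Icc 0 t) := by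
      intro s hs
      have hs' : s ∈ Set.Ico (0 : ℝ) τ := ⟨hs.1, lt_of_le_of_lt hs.2 htτ⟩
      exact (((hyd s hs').mul (Real.hasDerivAt_exp s)).continuousAt).continuousWithinAt
    have hconst := constant_of_has_deriv_right_zero hgc hgd t (Set.right_mem_Icc.2 ht0)
    -- g t = g 0 gives y t = x 0 0 * exp (-t)
    have hyt : y t = x 0 0 * Real.exp (-t) := by
      have h00 : g 0 = x 0 0 := by simp [hg, hy]
      rw [h00] at hconst
      have : y t = x 0 0 / Real.exp t := by
        field_simp [hg] at hconst ⊢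
        linarith [hconst]
      rw [this, Real.exp_neg]
      ring
    calc |x 0 0| * Real.exp (-τ) ≤ |x 0 0| * Real.exp (-t) := by
          apply mul_le_mul_of_nonneg_left (Real.exp_le_exp.2 (by linarith)) (abs_nonneg _)
      _ = |y t| := by rw [hyt, abs_mul, abs_of_pos (Real.exp_pos _)]
      _ ≤ ‖x t‖ := abs_coord_le_norm (x t) 0
end

section
/- Let τ > 0 and define a : [0,τ) → ℝ by a(t) = −(0.5 − sin(1/(τ−t)))/(τ−t)³. Then: (i) ∫₀ᵗ a(s) ds → −∞ as t → τ⁻, so every differentiable x : [0,τ) → ℝ with x'(t) = a(t)x(t) satisfies x(t) = x(0)·exp(∫₀ᵗ a(s) ds) → 0 as t → τ⁻ (the scalar system is prescribed-time attractive at τ); (ii) a(t) does not tend to a limit in the extended reals as t → τ⁻; in fact limsup_{t→τ⁻} a(t) = +∞ and liminf_{t→τ⁻} a(t) = −∞. -/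
open Matrix Filter Topology

/-!
In the variable `v = 1/(τ - t)`, which maps `𝓝[<] τ` onto `atTop`, the coefficient is
`a = v³ (sin v - 1/2)`. Since `dv/dt = v²`, `G v = sin v - v cos v - v²/4` (with
`G' v = v (sin v - 1/2)`) is a primitive of `a` in `t`, and `G v → -∞`; so `∫₀ᵗ a → -∞` and every
solution `x 0 * exp (∫₀ᵗ a)` tends to `0`. Along `v = π/2 + 2πn` and `v = -π/2 + 2πn` the
coefficient equals `v³/2` and `-3v³/2`, so it is unbounded in both directions.
-/

open Real Set

theorem eq_mul_exp_sub_of_hasDerivAt {a F x : ℝ → ℝ} {t₀ t : ℝ} (ht : t₀ ≤ t)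
    (hF : ∀ s ∈ Icc t₀ t, HasDerivAt F (a s) s)
    (hx : ∀ s ∈ Icc t₀ t, HasDerivAt x (a s * x s) s) :
    x t = x t₀ * exp (F t - F t₀) := by
  have hderiv : ∀ s ∈ Icc t₀ t, HasDerivAt (fun s => x s * exp (-F s)) 0 s := fun s hs =>
    ((hx s hs).mul (hF s hs).neg.exp).congr_deriv (by ring)
  have hconst : x t * exp (-F t) = x t₀ * exp (-F t₀) :=
    constant_of_has_deriv_right_zero (fun s hs => (hderiv s hs).continuousAt.continuousWithinAt)
      (fun s hs => (hderiv s (Ico_subset_Icc_self hs)).hasDerivWithinAt) t ⟨ht, le_rfl⟩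
  calc x t = x t * exp (-F t) * exp (F t) := by rw [mul_assoc, ← exp_add]; simp
    _ = x t₀ * exp (F t - F t₀) := by rw [hconst, mul_assoc, ← exp_add]; ring_nf

theorem EReal.limsup_coe_eq_top_of_tendsto_comp {α β : Type*} {l : Filter α} {lβ : Filter β}
    [lβ.NeBot] {f : α → ℝ} {u : β → α} (hu : Tendsto u lβ l)
    (hf : Tendsto (f ∘ u) lβ atTop) : limsup (fun x => (f x : EReal)) l = ⊤ := by
  refine (EReal.eq_top_iff_forall_lt _).2 fun y => ?_
  refine (EReal.coe_lt_coe_iff.2 (lt_add_one y)).trans_le (le_limsup_of_frequently_le' ?_)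
  exact hu.frequently <|
    (hf.eventually_ge_atTop (y + 1)).frequently.mono fun _ h => by exact_mod_cast h

theorem EReal.liminf_coe_eq_bot_of_tendsto_comp {α β : Type*} {l : Filter α} {lβ : Filter β}
    [lβ.NeBot] {f : α → ℝ} {u : β → α} (hu : Tendsto u lβ l)
    (hf : Tendsto (f ∘ u) lβ atBot) : liminf (fun x => (f x : EReal)) l = ⊥ := by
  refine (EReal.eq_bot_iff_forall_lt _).2 fun y => ?_
  refine (liminf_le_of_frequently_le' ?_).trans_lt (EReal.coe_lt_coe_iff.2 (sub_one_lt y))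
  exact hu.frequently <|
    (hf.eventually_le_atBot (y - 1)).frequently.mono fun _ h => by exact_mod_cast h

theorem not_tendsto_of_limsup_eq_top_of_liminf_eq_bot {α : Type*} {l : Filter α} [l.NeBot]
    {f : α → EReal} (hsup : limsup f l = ⊤) (hinf : liminf f l = ⊥) :
    ¬ ∃ L, Tendsto f l (𝓝 L) := by
  rintro ⟨L, hL⟩
  exact bot_ne_top (hinf.symm.trans (hL.liminf_eq.trans (hL.limsup_eq.symm.trans hsup)))

theorem map_inv_sub_nhdsLT (τ : ℝ) : map (fun t => (τ - t)⁻¹) (𝓝[<] τ) = atTop := by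
  rw [← Function.comp_def Inv.inv, ← Filter.map_map, map_subLeft_nhdsLT, sub_self,
    Filter.map_inv, inv_nhdsGT_zero]

theorem tendsto_add_natCast_mul_atTop (c : ℝ) {p : ℝ} (hp : 0 < p) :
    Tendsto (fun n : ℕ => c + n * p) atTop atTop :=
  tendsto_atTop_add_const_left _ c (tendsto_natCast_atTop_atTop.atTop_mul_const hp)

noncomputable def oscCoeff (v : ℝ) : ℝ := v ^ 3 * (sin v - 1 / 2)

noncomputable def oscPrimitive (v : ℝ) : ℝ := sin v - v * cos v - v ^ 2 / 4

theorem oscCoeff_inv (u : ℝ) : oscCoeff u⁻¹ = -((0.5 - sin (1 / u)) / u ^ 3) := by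
  rw [oscCoeff, one_div u]; ring

theorem continuous_oscCoeff : Continuous oscCoeff := by
  unfold oscCoeff; fun_prop

theorem hasDerivAt_oscPrimitive (v : ℝ) : HasDerivAt oscPrimitive (v * (sin v - 1 / 2)) v := by
  have := ((hasDerivAt_sin v).sub ((hasDerivAt_id v).mul (hasDerivAt_cos v))).sub
    ((hasDerivAt_pow 2 v).div_const 4)
  exact this.congr_deriv (by simp only [id]; ring)

theorem hasDerivAt_oscPrimitive_inv_sub {τ t : ℝ} (ht : t ≠ τ) :
    HasDerivAt (fun t => oscPrimitive (τ - t)⁻¹) (oscCoeff (τ - t)⁻¹) t := by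
  have hinv : HasDerivAt (fun t => (τ - t)⁻¹) ((τ - t) ^ 2)⁻¹ t :=
    (((hasDerivAt_id t).const_sub τ).inv (sub_ne_zero.2 ht.symm)).congr_deriv (by simp)
  exact ((hasDerivAt_oscPrimitive _).comp t hinv).congr_deriv
    (by simp only [oscCoeff, ← inv_pow]; ring)

theorem tendsto_oscPrimitive_atTop : Tendsto oscPrimitive atTop atBot := by
  refine tendsto_atBot_mono' _ ?_ (tendsto_atBot_add_const_left _ 1 tendsto_neg_atTop_atBot)
  filter_upwards [eventually_ge_atTop 8] with v hv
  unfold oscPrimitive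
  nlinarith [sin_le_one v, neg_one_le_cos v, cos_le_one v]

theorem oscCoeff_add_natCast_mul_two_pi (c : ℝ) (n : ℕ) :
    oscCoeff (c + n * (2 * π)) = (sin c - 1 / 2) * (c + n * (2 * π)) ^ 3 := by
  rw [oscCoeff, sin_add_nat_mul_two_pi, mul_comm]

theorem limsup_oscCoeff_atTop : limsup (fun v => (oscCoeff v : EReal)) atTop = ⊤ := by
  have hv := tendsto_add_natCast_mul_atTop (π / 2) two_pi_pos
  refine EReal.limsup_coe_eq_top_of_tendsto_comp hv <|
    (((tendsto_pow_atTop three_ne_zero).comp hv).const_mul_atTop ?_).congr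
      fun n => (oscCoeff_add_natCast_mul_two_pi _ n).symm
  norm_num

theorem liminf_oscCoeff_atTop : liminf (fun v => (oscCoeff v : EReal)) atTop = ⊥ := by
  have hv := tendsto_add_natCast_mul_atTop (-(π / 2)) two_pi_pos
  refine EReal.liminf_coe_eq_bot_of_tendsto_comp hv <|
    (((tendsto_pow_atTop three_ne_zero).comp hv).const_mul_atTop_of_neg ?_).congr
      fun n => (oscCoeff_add_natCast_mul_two_pi _ n).symm
  norm_num

theorem integral_oscCoeff_inv_sub {τ t₀ t : ℝ} (ht₀ : t₀ ≤ t) (ht : t < τ) :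
    ∫ s in t₀..t, oscCoeff (τ - s)⁻¹ = oscPrimitive (τ - t)⁻¹ - oscPrimitive (τ - t₀)⁻¹ := by
  have hlt : ∀ s ∈ uIcc t₀ t, s < τ := fun s hs => ((uIcc_of_le ht₀ ▸ hs).2).trans_lt ht
  refine intervalIntegral.integral_eq_sub_of_hasDerivAt
    (fun s hs => hasDerivAt_oscPrimitive_inv_sub (hlt s hs).ne) ?_
  refine ContinuousOn.intervalIntegrable (continuousOn_of_forall_continuousAt fun s hs => ?_)
  exact continuous_oscCoeff.continuousAt.comp
    ((continuousAt_const.sub continuousAt_id).inv₀ (sub_ne_zero.2 (hlt s hs).ne'))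

theorem tendsto_integral_oscCoeff_inv_sub {τ t₀ : ℝ} (ht₀ : t₀ < τ) :
    Tendsto (fun t => ∫ s in t₀..t, oscCoeff (τ - s)⁻¹) (𝓝[<] τ) atBot := by
  refine (tendsto_atBot_add_const_right _ (-oscPrimitive (τ - t₀)⁻¹)
    (tendsto_oscPrimitive_atTop.comp (map_inv_sub_nhdsLT τ).le)).congr' ?_
  filter_upwards [Ico_mem_nhdsLT ht₀] with t ht
  rw [integral_oscCoeff_inv_sub ht.1 ht.2, sub_eq_add_neg]; rfl

theorem limsup_oscCoeff_inv_sub (τ : ℝ) :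
    limsup (fun t => (oscCoeff (τ - t)⁻¹ : EReal)) (𝓝[<] τ) = ⊤ := by
  rw [← Function.comp_def (fun v => (oscCoeff v : EReal)), limsup_comp, map_inv_sub_nhdsLT]
  exact limsup_oscCoeff_atTop

theorem liminf_oscCoeff_inv_sub (τ : ℝ) :
    liminf (fun t => (oscCoeff (τ - t)⁻¹ : EReal)) (𝓝[<] τ) = ⊥ := by
  rw [← Function.comp_def (fun v => (oscCoeff v : EReal)), liminf_comp, map_inv_sub_nhdsLT]
  exact liminf_oscCoeff_atTop

/-- counterexample of Remark 1: for
`a(t) = -(0.5 - sin(1/(τ-t)))/(τ-t)³`, the integral `∫₀ᵗ a → -∞` (so the scalar system is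
PTA at `τ`, every solution being `x₀ exp(∫₀ᵗ a) → 0`), yet `a(t)` has no extended-real
limit as `t → τ⁻`: its limsup is `+∞` and its liminf is `-∞`. -/
theorem stmt15 (τ : ℝ) (hτ : 0 < τ) (a : ℝ → ℝ)
    (ha : ∀ t, a t = -((0.5 - Real.sin (1 / (τ - t))) / (τ - t) ^ 3)) :
    (Tendsto (fun t => ∫ s in (0 : ℝ)..t, a s) (𝓝[<] τ) atBot ∧
      ∀ x : ℝ → ℝ, (∀ t ∈ Set.Ico (0 : ℝ) τ, HasDerivAt x (a t * x t) t) →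
        (∀ t ∈ Set.Ico (0 : ℝ) τ, x t = x 0 * Real.exp (∫ s in (0 : ℝ)..t, a s)) ∧
        Tendsto (fun t => |x t|) (𝓝[<] τ) (𝓝 0)) ∧
    ((¬ ∃ L : EReal, Tendsto (fun t => ((a t : ℝ) : EReal)) (𝓝[<] τ) (𝓝 L)) ∧
      Filter.limsup (fun t => ((a t : ℝ) : EReal)) (𝓝[<] τ) = ⊤ ∧
      Filter.liminf (fun t => ((a t : ℝ) : EReal)) (𝓝[<] τ) = ⊥) := by
  obtain rfl : a = fun t => oscCoeff (τ - t)⁻¹ :=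
    funext fun t => (ha t).trans (oscCoeff_inv (τ - t)).symm
  have hsup := limsup_oscCoeff_inv_sub τ
  have hinf := liminf_oscCoeff_inv_sub τ
  have hIbot := tendsto_integral_oscCoeff_inv_sub hτ
  refine ⟨⟨hIbot, fun x hx => ?_⟩, not_tendsto_of_limsup_eq_top_of_liminf_eq_bot hsup hinf,
    hsup, hinf⟩
  have hsol : ∀ t ∈ Ico 0 τ, x t = x 0 * exp (∫ s in (0 : ℝ)..t, oscCoeff (τ - s)⁻¹) :=
    fun t ht => integral_oscCoeff_inv_sub ht.1 ht.2 ▸ eq_mul_exp_sub_of_hasDerivAt ht.1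
      (fun s hs => hasDerivAt_oscPrimitive_inv_sub (hs.2.trans_lt ht.2).ne)
      (fun s hs => hx s ⟨hs.1, hs.2.trans_lt ht.2⟩)
  refine ⟨hsol, ?_⟩
  have hdecay := (tendsto_exp_atBot.comp hIbot).const_mul |x 0|
  rw [mul_zero] at hdecay
  refine hdecay.congr' ?_
  filter_upwards [Ico_mem_nhdsLT hτ] with t ht
  rw [hsol t ht, abs_mul, abs_exp]; rfl
end
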